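/- Let p be an odd prime. Then $\sum_{k=1}^{p-1} \frac{D_k(-4)}{k} \equiv \frac{3-3^p}{p} \pmod{p}$, where $1/k$ denotes the inverse of k mod p and $(3-3^p)/p$ is an integer by Fermat's little theorem. -/

import Mathlib

/-!
Expand `D_k(-4) = ∑ⱼ C(k,j) C(k+j,j) (-4)^j` and swap the sums. For `1 ≤ j < p/2`, the identity
`C(k,j)/k = C(k-1,j-1)/j` turns the inner sum over `k` into `1/j` times the sum of
`C(k+j,j) C(k-1,j-1)` over `k ∈ 𝔽ₚˣ`. Up to the unit `(-1)^(j-1) j! (j-1)!` this is the sum of a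
polynomial of degree `2j-1 < p-1` over `𝔽ₚ` minus its value at `0`, so the inner sum is
`(-1)^j / j`. The term `j = 0` is `∑ 1/k = 0`, and for `j > p/2` every summand is divisible by `p`.
What is left is `∑_{j ≤ p/2} 4^j / j`, which `1/(2j) ≡ -C(p,2j)/p` turns into
`-2 ∑ⱼ C(p,2j) 4^j / p = (3 - 3^p)/p`, by `(1+2)^p + (1-2)^p = 2 ∑ⱼ C(p,2j) 4^j`.
-/

/-- The Delannoy polynomial `D_n(x)` at an integer `x`. -/
def delannoyPoly (n : ℕ) (x : ℤ) : ℤ :=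
  ∑ k ∈ Finset.range (n + 1), (n.choose k * (n + k).choose k : ℤ) * x ^ k

open Finset Nat Polynomial

theorem Finset.sum_range_two_mul {M : Type*} [AddCommMonoid M] (f : ℕ → M) (n : ℕ) :
    ∑ i ∈ range (2 * n), f i = ∑ j ∈ range n, (f (2 * j) + f (2 * j + 1)) := by
  induction n with
  | zero => simp
  | succ n ih => rw [mul_add_one, sum_range_succ, sum_range_succ, sum_range_succ, ih, add_assoc]

theorem one_add_pow_add_one_sub_pow_odd {R : Type*} [CommRing R] (x : R) (m : ℕ) :
    (1 + x) ^ (2 * m + 1) + (1 - x) ^ (2 * m + 1) =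
      2 * ∑ j ∈ range (m + 1), ((2 * m + 1).choose (2 * j) : R) * x ^ (2 * j) := by
  rw [add_comm 1 x, sub_eq_neg_add, add_pow, add_pow, ← sum_add_distrib,
    show 2 * m + 1 + 1 = 2 * (m + 1) by ring, sum_range_two_mul, mul_sum]
  refine sum_congr rfl fun j _ => ?_
  rw [(even_two_mul j).neg_pow, (odd_two_mul_add_one j).neg_pow]
  ring

theorem two_mul_sum_Icc_choose_mul_four_pow (m : ℕ) :
    2 * ∑ j ∈ Icc 1 m, ((2 * m + 1).choose (2 * j) : ℤ) * 4 ^ j = 3 ^ (2 * m + 1) - 3 := by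
  have h := one_add_pow_add_one_sub_pow_odd (2 : ℤ) m
  rw [show range (m + 1) = insert 0 (Icc 1 m) by grind, sum_insert (by simp)] at h
  simp_rw [pow_mul] at h
  norm_num [(odd_two_mul_add_one m).neg_one_pow] at h
  linear_combination -h

theorem Polynomial.sum_eval_eq_zero_of_natDegree_lt {K : Type*} [Field K] [Fintype K] (P : K[X])
    (h : P.natDegree < Fintype.card K - 1) : ∑ x, P.eval x = 0 := by
  simp_rw [eval_eq_sum_range, Finset.sum_comm (γ := K), ← Finset.mul_sum]
  exact Finset.sum_eq_zero fun i hi =>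
    by rw [FiniteField.sum_pow_lt_card_sub_one (K := K) i (by grind), mul_zero]

theorem ascPochhammer_eval_natCast_add_one (R : Type*) [CommRing R] (k n : ℕ) :
    (ascPochhammer R n).eval ((k : R) + 1) = (n ! * (k + n).choose n : ℕ) := by
  rw [← Nat.ascFactorial_eq_factorial_mul_choose, ← ascPochhammer_nat_eq_ascFactorial,
    ascPochhammer_eval_cast]
  push_cast
  rfl

theorem ascPochhammer_eval_neg_natCast (R : Type*) [CommRing R] (k n : ℕ) :
    (ascPochhammer R n).eval (-(k : R)) = (-1) ^ n * (n ! * k.choose n : ℕ) := by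
  rw [ascPochhammer_eval_neg_eq_descPochhammer, descPochhammer_eval_eq_descFactorial,
    Nat.descFactorial_eq_factorial_mul_choose]

theorem delannoyPoly_eq_sum_range {n N : ℕ} (h : n < N) (x : ℤ) :
    delannoyPoly n x = ∑ k ∈ range N, (n.choose k * (n + k).choose k : ℤ) * x ^ k := by
  refine sum_subset (by grind) fun k _ hk => ?_
  rw [Nat.choose_eq_zero_of_lt (by grind)]
  simp

theorem ZMod.natCast_ne_zero_of_lt {n p : ℕ} (h0 : n ≠ 0) (h : n < p) : (n : ZMod p) ≠ 0 := by
  rw [Ne, ZMod.natCast_eq_zero_iff]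
  exact fun hd => h0 (Nat.eq_zero_of_dvd_of_lt hd h)

section

variable {p : ℕ} [Fact p.Prime]

theorem ZMod.natCast_factorial_ne_zero {n : ℕ} (h : n < p) : (n ! : ZMod p) ≠ 0 := by
  rw [Ne, ZMod.natCast_eq_zero_iff, (Fact.out : p.Prime).dvd_factorial]
  omega

theorem ZMod.natCast_sub_one_choose {i : ℕ} (hi : i < p) :
    ((p - 1).choose i : ZMod p) = (-1) ^ i := by
  have h := ascPochhammer_eval_neg_natCast (ZMod p) (p - 1) i
  rw [Nat.cast_sub (Fact.out : p.Prime).one_le, ZMod.natCast_self, Nat.cast_one, zero_sub,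
    neg_neg, ascPochhammer_eval_one] at h
  have hsq : ((-1 : ZMod p) ^ i) ^ 2 = 1 := by rw [← pow_mul, pow_mul', neg_one_sq, one_pow]
  refine mul_left_cancel₀ (ZMod.natCast_factorial_ne_zero hi) ?_
  push_cast at h
  linear_combination (-(-1) ^ i) * h - (i ! * ((p - 1).choose i : ZMod p)) * hsq

theorem ZMod.natCast_choose_div_mul {i : ℕ} (hi0 : 0 < i) (hi : i < p) :
    ((p.choose i / p : ℕ) : ZMod p) * i = -(-1) ^ i := by
  have hp := (Fact.out : p.Prime)
  obtain ⟨q, hq⟩ := hp.dvd_choose_self hi0.ne' hi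
  have hpascal := Nat.add_one_mul_choose_eq (p - 1) (i - 1)
  rw [Nat.sub_add_cancel hp.one_le, Nat.sub_add_cancel hi0, hq, Nat.mul_assoc] at hpascal
  rw [hq, Nat.mul_div_cancel_left _ hp.pos, ← Nat.cast_mul,
    ← Nat.eq_of_mul_eq_mul_left hp.pos hpascal, ZMod.natCast_sub_one_choose (by omega)]
  obtain ⟨n, rfl⟩ := Nat.exists_eq_add_one_of_ne_zero hi0.ne'
  rw [Nat.add_sub_cancel, pow_succ, mul_neg_one, neg_neg]

theorem ZMod.sum_Icc_natCast {M : Type*} [AddCommGroup M] (f : ZMod p → M) :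
    ∑ k ∈ Icc 1 (p - 1), f k = ∑ x, f x - f 0 := by
  have hp := (Fact.out : p.Prime).pos
  rw [eq_sub_iff_add_eq, ← Finset.sum_erase_add _ _ (mem_univ 0)]
  congr 1
  refine Finset.sum_nbij' (fun k => (k : ZMod p)) ZMod.val ?_ ?_ ?_ ?_ (fun _ _ => rfl)
  · intro k hk
    simp only [mem_Icc, mem_erase, mem_univ, and_true] at hk ⊢
    exact ZMod.natCast_ne_zero_of_lt (by omega) (by omega)
  · intro x hx
    simp only [mem_Icc, mem_erase, mem_univ, and_true] at hx ⊢
    have hlt := x.val_lt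
    have hne := (ZMod.val_ne_zero x).mpr hx
    omega
  · intro k hk
    exact ZMod.val_cast_of_lt (by grind)
  · intro x _
    exact ZMod.natCast_zmod_val x

theorem ZMod.sum_Icc_eval {P : (ZMod p)[X]} (h : P.natDegree < p - 1) :
    ∑ k ∈ Icc 1 (p - 1), P.eval (k : ZMod p) = -P.eval 0 := by
  rw [ZMod.sum_Icc_natCast (fun x => P.eval x),
    P.sum_eval_eq_zero_of_natDegree_lt (by rwa [ZMod.card]), zero_sub]

theorem ZMod.sum_Icc_inv (hp : p ≠ 2) : ∑ k ∈ Icc 1 (p - 1), (k : ZMod p)⁻¹ = 0 := by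
  have h : 1 < Fintype.card (ZMod p) - 1 := by
    have := (Fact.out : p.Prime).two_le
    rw [ZMod.card]
    omega
  rw [ZMod.sum_Icc_natCast (fun x : ZMod p => x⁻¹), inv_zero, sub_zero,
    Fintype.sum_equiv (Equiv.inv (ZMod p)) (fun x => x⁻¹) id (fun _ => rfl)]
  simpa using FiniteField.sum_pow_lt_card_sub_one (K := ZMod p) 1 h

theorem ZMod.sum_Icc_add_choose_mul_sub_one_choose {n : ℕ} (h : 2 * n + 2 < p) :
    ∑ k ∈ Icc 1 (p - 1), (((k + (n + 1)).choose (n + 1) * (k - 1).choose n : ℕ) : ZMod p) =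
      (-1) ^ (n + 1) := by
  set g : (ZMod p)[X] :=
    (ascPochhammer (ZMod p) (n + 1)).comp (X + 1) * (ascPochhammer (ZMod p) n).comp (1 - X)
  have hdeg : g.natDegree < p - 1 := by
    have h1 : (X + 1 : (ZMod p)[X]).natDegree = 1 := natDegree_X_add_C 1
    have h2 : (1 - X : (ZMod p)[X]).natDegree = 1 := by
      rw [← neg_sub, natDegree_neg]
      exact natDegree_X_sub_C 1
    calc g.natDegree ≤ _ := natDegree_mul_le
      _ = (n + 1) + n := by
        rw [natDegree_comp, natDegree_comp, h1, h2, ascPochhammer_natDegree,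
          ascPochhammer_natDegree, mul_one, mul_one]
      _ < p - 1 := by omega
  have hunit : ((n + 1)! * n ! : ZMod p) ≠ 0 :=
    mul_ne_zero (ZMod.natCast_factorial_ne_zero (by omega))
      (ZMod.natCast_factorial_ne_zero (by omega))
  have hg0 : g.eval 0 = (n + 1)! * n ! := by simp [g]
  have hgk : ∀ k ∈ Icc 1 (p - 1), g.eval (k : ZMod p) = (-1) ^ n * ((n + 1)! * n ! : ZMod p) *
      (((k + (n + 1)).choose (n + 1) * (k - 1).choose n : ℕ) : ZMod p) := by
    intro k hk
    obtain ⟨k, rfl⟩ := Nat.exists_eq_add_one_of_ne_zero (by grind : k ≠ 0)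
    have : (1 : ZMod p) - (k + 1 : ℕ) = -(k : ZMod p) := by push_cast; ring
    simp only [g, eval_mul, eval_comp, eval_add, eval_sub, eval_X, eval_one, this,
      ascPochhammer_eval_natCast_add_one, ascPochhammer_eval_neg_natCast]
    push_cast
    ring
  have hsum := ZMod.sum_Icc_eval hdeg
  rw [Finset.sum_congr rfl hgk, ← Finset.mul_sum, hg0] at hsum
  have hsign : (-1 : ZMod p) ^ n * (-1) ^ (n + 1) = -1 := by
    rw [← pow_add]
    exact Odd.neg_one_pow ⟨n, by ring⟩
  refine mul_left_cancel₀ (mul_ne_zero (pow_ne_zero n (neg_ne_zero.mpr one_ne_zero)) hunit) ?_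
  rw [hsum]
  linear_combination (-((n + 1)! * n ! : ZMod p)) * hsign

theorem ZMod.sum_Icc_choose_mul_add_choose_mul_inv {j : ℕ} (hj : 0 < j) (h : 2 * j < p) :
    ∑ k ∈ Icc 1 (p - 1), ((k.choose j * (k + j).choose j : ℕ) : ZMod p) * (k : ZMod p)⁻¹ =
      (-1) ^ j * (j : ZMod p)⁻¹ := by
  obtain ⟨n, rfl⟩ := Nat.exists_eq_add_one_of_ne_zero hj.ne'
  have hn : ((n + 1 : ℕ) : ZMod p) ≠ 0 := ZMod.natCast_ne_zero_of_lt hj.ne' (by omega)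
  have hterm : ∀ k ∈ Icc 1 (p - 1),
      ((k.choose (n + 1) * (k + (n + 1)).choose (n + 1) : ℕ) : ZMod p) * (k : ZMod p)⁻¹ =
        ((n + 1 : ℕ) : ZMod p)⁻¹ *
          (((k + (n + 1)).choose (n + 1) * (k - 1).choose n : ℕ) : ZMod p) := by
    intro k hk
    obtain ⟨k, rfl⟩ := Nat.exists_eq_add_one_of_ne_zero (by grind : k ≠ 0)
    have hk0 : ((k + 1 : ℕ) : ZMod p) ≠ 0 := ZMod.natCast_ne_zero_of_lt (by omega) (by grind)
    have hpascal := congrArg (Nat.cast : ℕ → ZMod p) (Nat.add_one_mul_choose_eq k n)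
    push_cast at hpascal hk0 hn ⊢
    field_simp
    linear_combination (-((k + 1 + (n + 1)).choose (n + 1) : ZMod p)) * hpascal
  rw [sum_congr rfl hterm, ← mul_sum, ZMod.sum_Icc_add_choose_mul_sub_one_choose (by omega)]
  ring

theorem ZMod.natCast_choose_mul_add_choose_eq_zero {j k : ℕ} (hj : j < p) (hk : k < p)
    (h : p ≤ 2 * j) : ((k.choose j * (k + j).choose j : ℕ) : ZMod p) = 0 := by
  rw [ZMod.natCast_eq_zero_iff]
  rcases lt_or_ge k j with hkj | hjk
  · simp [Nat.choose_eq_zero_of_lt hkj]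
  · exact dvd_mul_of_dvd_right ((Fact.out : p.Prime).dvd_choose hj (by omega) (by omega)) _

theorem ZMod.sum_Icc_four_pow_mul_inv (hp : Odd p) :
    ∑ j ∈ Icc 1 (p / 2), (4 : ZMod p) ^ j * (j : ZMod p)⁻¹ =
      (((3 - 3 ^ p) / p : ℤ) : ZMod p) := by
  have hprime : p.Prime := Fact.out
  obtain ⟨m, hm⟩ := hp
  rw [show p / 2 = m by omega]
  set N : ℕ := ∑ j ∈ Icc 1 m, p.choose (2 * j) / p * 4 ^ j with hNdef
  have hinv : ∀ j ∈ Icc 1 m, (4 : ZMod p) ^ j * (j : ZMod p)⁻¹ =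
      -2 * ((p.choose (2 * j) / p * 4 ^ j : ℕ) : ZMod p) := by
    intro j hj
    have h := ZMod.natCast_choose_div_mul (p := p) (i := 2 * j) (by grind) (by grind)
    rw [pow_mul, neg_one_sq, one_pow] at h
    rw [inv_eq_of_mul_eq_one_right (b := -2 * ((p.choose (2 * j) / p : ℕ) : ZMod p))
      (by push_cast at h; linear_combination -h)]
    push_cast
    ring
  have hN : p * N = ∑ j ∈ Icc 1 m, p.choose (2 * j) * 4 ^ j := by
    rw [mul_sum]
    refine sum_congr rfl fun j hj => ?_
    rw [← mul_assoc, Nat.mul_div_cancel' (hprime.dvd_choose_self (by grind) (by grind))]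
  have hq : ((3 - 3 ^ p) / p : ℤ) = -(2 * N) := by
    refine Int.ediv_eq_of_eq_mul_right (by exact_mod_cast hprime.ne_zero) ?_
    have hNint := congrArg (Nat.cast : ℕ → ℤ) hN
    push_cast at hNint
    have hbinom := two_mul_sum_Icc_choose_mul_four_pow m
    rw [← hm] at hbinom
    linear_combination hbinom + 2 * hNint
  rw [sum_congr rfl hinv, ← mul_sum, ← Nat.cast_sum, ← hNdef, hq]
  push_cast
  ring

end

theorem sun_1_5 (p : ℕ) [Fact p.Prime] (hp : Odd p) :
    ∑ k ∈ Finset.Icc 1 (p - 1), (delannoyPoly k (-4) : ZMod p) * (k : ZMod p)⁻¹ =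
      (((3 - 3 ^ p) / p : ℤ) : ZMod p) := by
  set S : ℕ → ZMod p := fun j =>
    ∑ k ∈ Icc 1 (p - 1), ((k.choose j * (k + j).choose j : ℕ) : ZMod p) * (k : ZMod p)⁻¹
  have hvanish : ∀ j ∈ range p, j ∉ Icc 1 (p / 2) → (-4 : ZMod p) ^ j * S j = 0 := by
    intro j hj hj'
    rcases Nat.eq_zero_or_pos j with rfl | hj0
    · simp [S, ZMod.sum_Icc_inv (show p ≠ 2 by rintro rfl; exact absurd hp (by decide))]
    · refine mul_eq_zero_of_right _ (sum_eq_zero fun k hk => ?_)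
      rw [ZMod.natCast_choose_mul_add_choose_eq_zero (by grind) (by grind) (by grind), zero_mul]
  calc _ = ∑ k ∈ Icc 1 (p - 1), ∑ j ∈ range p, (-4 : ZMod p) ^ j *
        (((k.choose j * (k + j).choose j : ℕ) : ZMod p) * (k : ZMod p)⁻¹) :=
        sum_congr rfl fun k hk => by
          rw [delannoyPoly_eq_sum_range (N := p) (by grind), Int.cast_sum, sum_mul]
          push_cast
          exact sum_congr rfl fun j _ => by ring
    _ = ∑ j ∈ range p, (-4 : ZMod p) ^ j * S j := by rw [sum_comm]; simp only [S, mul_sum]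
    _ = ∑ j ∈ Icc 1 (p / 2), (-4 : ZMod p) ^ j * S j := (sum_subset (by grind) hvanish).symm
    _ = ∑ j ∈ Icc 1 (p / 2), (4 : ZMod p) ^ j * (j : ZMod p)⁻¹ := sum_congr rfl fun j hj => by
        dsimp only [S]
        rw [ZMod.sum_Icc_choose_mul_add_choose_mul_inv (by grind) (by grind), ← mul_assoc,
          ← mul_pow]
        norm_num
    _ = _ := ZMod.sum_Icc_four_pow_mul_inv hp
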